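/- Let a, b be vertices of a temporal graph and let t_α ≤ t_ω. Let S = {t ∈ T_out(a) : t_α ≤ t ≤ t_ω, P(a, b, [t, t_ω]) ≠ ∅}, where T_out(a) = {t : (a, u, t, λ) ∈ 𝒠}. If P(a, b, [t_α, t_ω]) ≠ ∅, then S ≠ ∅ and the minimum duration satisfies: min{dura(P) : P ∈ P(a, b, [t_α, t_ω])} = min{ min{end(P') : P' ∈ P(a, b, [t, t_ω])} − t : t ∈ S }. -/

import Mathlib

/-- Consecutive-edge condition for a temporal path: the head vertex of the next
edge is the tail vertex of the current one, and `t_i + λ_i ≤ t_{i+1}`. -/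
def StepOK {V : Type*} (e f : V × V × ℕ × ℕ) : Prop :=
  e.2.1 = f.1 ∧ e.2.2.1 + e.2.2.2 ≤ f.2.2.1

/-- `P` is a temporal path from `a` to `b` in the temporal graph with
temporal edge set `E`. -/
def IsTempPath {V : Type*} (E : Finset (V × V × ℕ × ℕ)) (a b : V)
    (P : List (V × V × ℕ × ℕ)) : Prop :=
  P ≠ [] ∧ (∀ e ∈ P, e ∈ E) ∧ List.Chain' StepOK P ∧
    (P.head?.map fun e => e.1) = some a ∧ (P.getLast?.map fun e => e.2.1) = some b

/-- The starting time `start(P)` of a (nonempty) temporal path. -/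
def startT {V : Type*} (P : List (V × V × ℕ × ℕ)) : ℕ :=
  (P.head?.map fun e => e.2.2.1).getD 0

/-- The ending time `end(P)` of a (nonempty) temporal path. -/
def endT {V : Type*} (P : List (V × V × ℕ × ℕ)) : ℕ :=
  (P.getLast?.map fun e => e.2.2.1 + e.2.2.2).getD 0

/-- The duration `dura(P) = end(P) - start(P)` of a temporal path. -/
def duraT {V : Type*} (P : List (V × V × ℕ × ℕ)) : ℕ := endT P - startT P

/-- `T_out(a)`: the set of starting times of out-edges of `a`. -/
def Tout {V : Type*} (E : Finset (V × V × ℕ × ℕ)) (a : V) : Set ℕ :=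
  {t | ∃ u l, (a, u, t, l) ∈ E}

/-!
A minimum-duration path `P` starts at some `t = start(P) ∈ T_out(a)`, and its duration is at
least `end(P) - t`, which in turn is at least the earliest arrival from time `t` minus `t`.
Conversely, for every feasible `t`, an earliest-arrival path from time `t` starts no earlier
than `t`, so its duration is at most its arrival time minus `t`.
-/

/-- The paper's `P(a, b, [t, tw])`. -/
def tempPaths {V : Type*} (E : Finset (V × V × ℕ × ℕ)) (a b : V) (t tw : ℕ) :
    Set (List (V × V × ℕ × ℕ)) :=
  {P | IsTempPath E a b P ∧ t ≤ startT P ∧ endT P ≤ tw}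

/-- Junk value `0` when `P(a, b, [t, tw])` is empty. -/
noncomputable def earliestArrival {V : Type*} (E : Finset (V × V × ℕ × ℕ)) (a b : V)
    (t tw : ℕ) : ℕ :=
  sInf (endT '' tempPaths E a b t tw)

/-- The paper's `S`. -/
def feasibleStarts {V : Type*} (E : Finset (V × V × ℕ × ℕ)) (a b : V) (ta tw : ℕ) : Set ℕ :=
  {t ∈ Tout E a | ta ≤ t ∧ t ≤ tw ∧ (tempPaths E a b t tw).Nonempty}

section

variable {V : Type*} {E : Finset (V × V × ℕ × ℕ)} {a b : V} {t t' ta tw : ℕ}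
  {P : List (V × V × ℕ × ℕ)}

lemma startT_le_endT_of_isChain : ∀ {P : List (V × V × ℕ × ℕ)}, List.IsChain StepOK P →
    startT P ≤ endT P
  | [], _ => le_rfl
  | [_], _ => by simp [startT, endT]
  | e :: f :: l, hc => by
    obtain ⟨⟨-, hstep⟩, hc'⟩ := List.isChain_cons_cons.mp hc
    have ih : f.2.2.1 ≤ endT (f :: l) := by simpa [startT] using startT_le_endT_of_isChain hc'
    have hend : endT (e :: f :: l) = endT (f :: l) := by simp [endT, List.getLast?_cons_cons]
    have hstart : startT (e :: f :: l) = e.2.2.1 := rfl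
    omega

lemma IsTempPath.startT_le_endT (h : IsTempPath E a b P) : startT P ≤ endT P :=
  startT_le_endT_of_isChain h.2.2.1

lemma IsTempPath.startT_mem_Tout (h : IsTempPath E a b P) : startT P ∈ Tout E a := by
  obtain ⟨hne, hE, -, hhead, -⟩ := h
  obtain ⟨⟨x, u, s, l⟩, P, rfl⟩ := List.exists_cons_of_ne_nil hne
  obtain rfl : x = a := by simpa using hhead
  exact ⟨u, l, hE _ List.mem_cons_self⟩

lemma tempPaths_anti (htt' : t ≤ t') : tempPaths E a b t' tw ⊆ tempPaths E a b t tw :=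
  fun _ ⟨hP, hs, he⟩ => ⟨hP, htt'.trans hs, he⟩

lemma mem_tempPaths_startT (hP : P ∈ tempPaths E a b ta tw) :
    P ∈ tempPaths E a b (startT P) tw :=
  ⟨hP.1, le_rfl, hP.2.2⟩

lemma startT_mem_feasibleStarts (hP : P ∈ tempPaths E a b ta tw) :
    startT P ∈ feasibleStarts E a b ta tw :=
  ⟨hP.1.startT_mem_Tout, hP.2.1, hP.1.startT_le_endT.trans hP.2.2, P, mem_tempPaths_startT hP⟩

lemma sInf_duraT_le_earliestArrival_sub (hta : ta ≤ t)
    (hne : (tempPaths E a b t tw).Nonempty) :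
    sInf (duraT '' tempPaths E a b ta tw) ≤ earliestArrival E a b t tw - t := by
  obtain ⟨P, hP, hPend⟩ := Nat.sInf_mem (hne.image endT)
  calc sInf (duraT '' tempPaths E a b ta tw)
      ≤ duraT P := Nat.sInf_le (Set.mem_image_of_mem duraT (tempPaths_anti hta hP))
    _ ≤ endT P - t := Nat.sub_le_sub_left hP.2.1 _
    _ = earliestArrival E a b t tw - t := by rw [earliestArrival, hPend]

lemma earliestArrival_sub_le_duraT (hP : P ∈ tempPaths E a b ta tw) :
    earliestArrival E a b (startT P) tw - startT P ≤ duraT P :=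
  Nat.sub_le_sub_right (Nat.sInf_le (Set.mem_image_of_mem endT (mem_tempPaths_startT hP))) _

end

theorem minimum_duration_correct_general {V : Type*} (E : Finset (V × V × ℕ × ℕ))
    (a b : V) (ta tw : ℕ)
    (hne : ∃ P, IsTempPath E a b P ∧ ta ≤ startT P ∧ endT P ≤ tw) :
    (∃ t, t ∈ Tout E a ∧ ta ≤ t ∧ t ≤ tw ∧
        ∃ P, IsTempPath E a b P ∧ t ≤ startT P ∧ endT P ≤ tw) ∧
    sInf {d | ∃ P, (IsTempPath E a b P ∧ ta ≤ startT P ∧ endT P ≤ tw) ∧ duraT P = d} =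
    sInf {d | ∃ t, (t ∈ Tout E a ∧ ta ≤ t ∧ t ≤ tw ∧
        ∃ P, IsTempPath E a b P ∧ t ≤ startT P ∧ endT P ≤ tw) ∧
      d = sInf {n | ∃ P', (IsTempPath E a b P' ∧ t ≤ startT P' ∧ endT P' ≤ tw) ∧
            endT P' = n} - t} := by
  obtain ⟨P₀, hP₀⟩ : (tempPaths E a b ta tw).Nonempty := hne
  refine ⟨⟨_, startT_mem_feasibleStarts hP₀⟩, ?_⟩
  show sInf (duraT '' tempPaths E a b ta tw) =
    sInf {d | ∃ t ∈ feasibleStarts E a b ta tw, d = earliestArrival E a b t tw - t}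
  apply le_antisymm
  · refine le_csInf ⟨_, startT P₀, startT_mem_feasibleStarts hP₀, rfl⟩ ?_
    rintro _ ⟨t, ⟨-, hta, -, hpaths⟩, rfl⟩
    exact sInf_duraT_le_earliestArrival_sub hta hpaths
  · obtain ⟨P, hP, hPdura⟩ := Nat.sInf_mem ⟨_, Set.mem_image_of_mem duraT hP₀⟩
    rw [← hPdura]
    have hmem : earliestArrival E a b (startT P) tw - startT P ∈
        {d | ∃ t ∈ feasibleStarts E a b ta tw, d = earliestArrival E a b t tw - t} :=
      ⟨_, startT_mem_feasibleStarts hP, rfl⟩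
    exact (Nat.sInf_le hmem).trans (earliestArrival_sub_le_duraT hP)

theorem minimum_duration_correct {V : Type*} (E : Finset (V × V × ℕ × ℕ))
    (a b : V) (ta tw : ℕ) (htatw : ta ≤ tw)
    (hne : ∃ P, IsTempPath E a b P ∧ ta ≤ startT P ∧ endT P ≤ tw) :
    (∃ t, t ∈ Tout E a ∧ ta ≤ t ∧ t ≤ tw ∧
        ∃ P, IsTempPath E a b P ∧ t ≤ startT P ∧ endT P ≤ tw) ∧
    sInf {d | ∃ P, (IsTempPath E a b P ∧ ta ≤ startT P ∧ endT P ≤ tw) ∧ duraT P = d} =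
    sInf {d | ∃ t, (t ∈ Tout E a ∧ ta ≤ t ∧ t ≤ tw ∧
        ∃ P, IsTempPath E a b P ∧ t ≤ startT P ∧ endT P ≤ tw) ∧
      d = sInf {n | ∃ P', (IsTempPath E a b P' ∧ t ≤ startT P' ∧ endT P' ≤ tw) ∧
            endT P' = n} - t} :=
  minimum_duration_correct_general E a b ta tw hne
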